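/- arXiv:1108.3392 — 4 statements merged into one kernel-verified Lean document; each statement's English description precedes it below -/
import Mathlib

section
/- Let φ ∈ L∞(ℝ, X) with Pφ ∈ L∞(ℝ, X), where Pφ(t) = ∫₀^t φ(s) ds. Then sp(φ) ⊆ sp(Pφ) ⊆ sp(φ) ∪ {0}, where sp denotes the Beurling spectrum. -/
open MeasureTheory Filter Topology

noncomputable section

variable {X : Type*} [NormedAddCommGroup X] [NormedSpace ℂ X] [CompleteSpace X]

def scConv (f : ℝ → ℂ) (φ : ℝ → X) (t : ℝ) : X := ∫ s, f s • φ (t - s)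

def FT (f : ℝ → ℂ) (ω : ℝ) : ℂ := ∫ t : ℝ, f t * Complex.exp (-(Complex.I * ω * t))

def EssBdd (φ : ℝ → X) : Prop :=
  AEStronglyMeasurable φ (volume : Measure ℝ) ∧ ∃ C : ℝ, ∀ᵐ t : ℝ, ‖φ t‖ ≤ C

/-- The Beurling spectrum. -/
def BSpec (φ : ℝ → X) : Set ℝ :=
  {ω | ∀ f : ℝ → ℂ, Integrable f → (∀ᵐ t : ℝ, scConv f φ t = 0) → FT f ω = 0}

/-- The indefinite integral `(Pφ)(t) = ∫₀^t φ(s) ds`. -/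
def P (φ : ℝ → X) (t : ℝ) : X := ∫ s in (0:ℝ)..t, φ s

/-!
For `f ∈ L¹`, Fubini gives `∫ₐᵇ (f ⋆ φ) = (f ⋆ Pφ)(b) - (f ⋆ Pφ)(a)`. Hence `f ⋆ Pφ` is a constant
plus a primitive, so it is continuous: if it vanishes a.e. it vanishes everywhere, every interval
integral of `f ⋆ φ` vanishes, and by Lebesgue differentiation `f ⋆ φ = 0` a.e. This gives
`sp(φ) ⊆ sp(Pφ)`.

Conversely, if `f ⋆ φ = 0` a.e. then `f ⋆ Pφ` is constant, so `g = f(· - a) - f` annihilates `Pφ`,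
while `ĝ(ω) = (e^{-iωa} - 1) f̂(ω)`. For `ω ≠ 0` the choice `a = π/ω` gives `ĝ(ω) = -2 f̂(ω)`.
-/

section EssBdd

variable {E : Type*} [NormedAddCommGroup E] {ψ : ℝ → E}

theorem EssBdd.memLp_top (hψ : EssBdd ψ) : MemLp ψ ⊤ volume :=
  memLp_top_of_bound hψ.1 _ hψ.2.choose_spec

theorem EssBdd.memLp_top_comp {α : Type*} [MeasurableSpace α] {μ : Measure α} {T : α → ℝ}
    (hψ : EssBdd ψ) (hT : Measure.QuasiMeasurePreserving T μ volume) :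
    MemLp (fun x => ψ (T x)) ⊤ μ :=
  memLp_top_of_bound (hψ.1.comp_quasiMeasurePreserving hT) _ (hT.ae hψ.2.choose_spec)

theorem EssBdd.locallyIntegrable (hψ : EssBdd ψ) : LocallyIntegrable ψ volume :=
  hψ.memLp_top.locallyIntegrable le_top

theorem EssBdd.intervalIntegrable (hψ : EssBdd ψ) (a b : ℝ) : IntervalIntegrable ψ volume a b :=
  (hψ.locallyIntegrable.integrableOn_isCompact isCompact_uIcc).intervalIntegrable

end EssBdd

theorem ae_eq_zero_of_forall_intervalIntegral_eq_zero {E : Type*} [NormedAddCommGroup E]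
    [NormedSpace ℝ E] [CompleteSpace E] {g : ℝ → E} (hg : LocallyIntegrable g volume)
    (h : ∀ b, ∫ u in (0 : ℝ)..b, g u = 0) : g =ᵐ[volume] 0 := by
  filter_upwards [LocallyIntegrable.ae_hasDerivAt_integral hg] with x hx
  have hderiv := hx 0
  simp_rw [h] at hderiv
  exact hderiv.unique (hasDerivAt_const x 0)

section Convolution

variable {E : Type*} [NormedAddCommGroup E] [NormedSpace ℂ E] {f g : ℝ → ℂ} {ψ : ℝ → E}

theorem integrable_smul_comp_sub (hf : Integrable f) (hψ : EssBdd ψ) (t : ℝ) :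
    Integrable (fun s => f s • ψ (t - s)) :=
  hf.smul_of_top_left
    (hψ.memLp_top_comp (Measure.measurePreserving_sub_left volume t).quasiMeasurePreserving)

theorem integrable_smul_comp_sub_prod (hf : Integrable f) (hψ : EssBdd ψ) (s : Set ℝ)
    [IsFiniteMeasure (volume.restrict s)] :
    Integrable (fun p : ℝ × ℝ => f p.2 • ψ (p.1 - p.2)) ((volume.restrict s).prod volume) := by
  have hψ₂ : MemLp (fun p : ℝ × ℝ => ψ (p.1 - p.2)) ⊤ (volume.prod volume) :=
    hψ.memLp_top_comp <| Measure.quasiMeasurePreserving_fst.comp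
      (measurePreserving_sub_prod volume volume).quasiMeasurePreserving
  have hμ : (volume.restrict s).prod volume
      = (volume.prod volume).restrict (s ×ˢ (Set.univ : Set ℝ)) := by
    rw [← Measure.prod_restrict, Measure.restrict_univ]
  exact (hf.comp_snd _).smul_of_top_left (hμ ▸ hψ₂.restrict _)

theorem EssBdd.scConv (hψ : EssBdd ψ) (hf : Integrable f) : EssBdd (scConv f ψ) := by
  obtain ⟨hψm, C, hC⟩ := hψ
  refine ⟨(hf.aestronglyMeasurable.convolution_integrand (ContinuousLinearMap.lsmul ℂ ℂ)
    hψm).integral_prod_right', ∫ s, ‖f s‖ * C, ae_of_all _ fun t => ?_⟩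
  refine norm_integral_le_of_norm_le (hf.norm.mul_const C) ?_
  filter_upwards [(Measure.measurePreserving_sub_left volume t).quasiMeasurePreserving.ae hC]
    with s hs
  rw [norm_smul]
  exact mul_le_mul_of_nonneg_left hs (norm_nonneg _)

theorem scConv_sub (hf : Integrable f) (hg : Integrable g) (hψ : EssBdd ψ) (t : ℝ) :
    scConv (f - g) ψ t = scConv f ψ t - scConv g ψ t := by
  simp only [scConv, Pi.sub_apply, sub_smul]
  exact integral_sub (integrable_smul_comp_sub hf hψ t) (integrable_smul_comp_sub hg hψ t)

theorem scConv_comp_sub_right (f : ℝ → ℂ) (ψ : ℝ → E) (a t : ℝ) :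
    scConv (fun s => f (s - a)) ψ t = scConv f ψ (t - a) := by
  rw [scConv, scConv, ← integral_sub_right_eq_self (fun s => f s • ψ (t - a - s)) a]
  simp only [sub_sub_sub_cancel_right]

end Convolution

theorem integrable_mul_exp_neg_I_mul {f : ℝ → ℂ} (hf : Integrable f) (ω : ℝ) :
    Integrable (fun t : ℝ => f t * Complex.exp (-(Complex.I * ω * t))) :=
  hf.mul_bdd (c := 1)
    (by fun_prop : Continuous fun t : ℝ => Complex.exp (-(Complex.I * ω * t))).aestronglyMeasurable
    (ae_of_all _ fun t => by simp [Complex.norm_exp])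

theorem FT_sub {f g : ℝ → ℂ} (hf : Integrable f) (hg : Integrable g) (ω : ℝ) :
    FT (f - g) ω = FT f ω - FT g ω := by
  simp only [FT, Pi.sub_apply, sub_mul]
  exact integral_sub (integrable_mul_exp_neg_I_mul hf ω) (integrable_mul_exp_neg_I_mul hg ω)

theorem FT_comp_sub_right (f : ℝ → ℂ) (a ω : ℝ) :
    FT (fun s => f (s - a)) ω = Complex.exp (-(Complex.I * ω * a)) * FT f ω := by
  rw [FT, FT, ← integral_const_mul, ← integral_add_right_eq_self _ a]
  congr 1
  ext t
  rw [add_sub_cancel_right, Complex.ofReal_add, mul_add, neg_add, Complex.exp_add]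
  ring

section Primitive

variable {E : Type*} [NormedAddCommGroup E] [NormedSpace ℂ E] {f : ℝ → ℂ} {φ : ℝ → E}

theorem intervalIntegral_scConv (hf : Integrable f) (hφ : EssBdd φ) (hPφ : EssBdd (P φ))
    (a b : ℝ) : ∫ u in a..b, scConv f φ u = scConv f (P φ) b - scConv f (P φ) a := by
  have : IsFiniteMeasure (volume.restrict (Set.uIoc a b)) := Real.isFiniteMeasure_restrict_Ioc _ _
  have hinner (s : ℝ) : ∫ u in a..b, f s • φ (u - s) = f s • (P φ (b - s) - P φ (a - s)) := by
    rw [intervalIntegral.integral_smul, intervalIntegral.integral_comp_sub_right, P, P,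
      intervalIntegral.integral_interval_sub_left (hφ.intervalIntegrable _ _)
        (hφ.intervalIntegrable _ _)]
  calc ∫ u in a..b, scConv f φ u = ∫ s, ∫ u in a..b, f s • φ (u - s) :=
        intervalIntegral_integral_swap (integrable_smul_comp_sub_prod hf hφ _)
    _ = ∫ s, (f s • P φ (b - s) - f s • P φ (a - s)) := by simp_rw [hinner, smul_sub]
    _ = scConv f (P φ) b - scConv f (P φ) a :=
        integral_sub (integrable_smul_comp_sub hf hPφ b) (integrable_smul_comp_sub hf hPφ a)

theorem continuous_scConv_primitive (hf : Integrable f) (hφ : EssBdd φ) (hPφ : EssBdd (P φ)) :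
    Continuous (scConv f (P φ)) := by
  have hprimitive :
      scConv f (P φ) = fun t => scConv f (P φ) 0 + ∫ u in (0 : ℝ)..t, scConv f φ u := by
    ext t
    rw [intervalIntegral_scConv hf hφ hPφ, add_sub_cancel]
  rw [hprimitive]
  exact continuous_const.add
    (intervalIntegral.continuous_primitive (hφ.scConv hf).intervalIntegrable 0)

theorem scConv_ae_eq_zero_of_scConv_primitive [CompleteSpace E] (hf : Integrable f) (hφ : EssBdd φ)
    (hPφ : EssBdd (P φ)) (h : ∀ᵐ t, scConv f (P φ) t = 0) : ∀ᵐ t, scConv f φ t = 0 := by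
  have hzero : scConv f (P φ) = 0 :=
    ((continuous_scConv_primitive hf hφ hPφ).ae_eq_iff_eq volume continuous_const).mp h
  refine ae_eq_zero_of_forall_intervalIntegral_eq_zero (hφ.scConv hf).locallyIntegrable fun b => ?_
  rw [intervalIntegral_scConv hf hφ hPφ, hzero, Pi.zero_apply, Pi.zero_apply, sub_self]

theorem scConv_primitive_eq_of_ae_eq_zero (hf : Integrable f) (hφ : EssBdd φ)
    (hPφ : EssBdd (P φ)) (h : ∀ᵐ t, scConv f φ t = 0) (t : ℝ) :
    scConv f (P φ) t = scConv f (P φ) 0 := by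
  rw [← sub_eq_zero, ← intervalIntegral_scConv hf hφ hPφ]
  exact intervalIntegral.integral_zero_ae (h.mono fun _ hu _ => hu)

end Primitive

theorem spec_primitive_subset (φ : ℝ → X) (hφ : EssBdd φ) (hPφ : EssBdd (P φ)) :
    BSpec φ ⊆ BSpec (P φ) ∧ BSpec (P φ) ⊆ BSpec φ ∪ {0} := by
  refine ⟨fun ω hω f hf hPφf => hω f hf (scConv_ae_eq_zero_of_scConv_primitive hf hφ hPφ hPφf),
    fun ω hω => ?_⟩
  rcases eq_or_ne ω 0 with rfl | hω₀
  · exact Or.inr rfl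
  refine Or.inl fun f hf hφf => ?_
  set a := Real.pi / ω
  have hfa : Integrable (fun s => f (s - a)) := hf.comp_sub_right a
  have hannihilates (t : ℝ) : scConv ((fun s => f (s - a)) - f) (P φ) t = 0 := by
    have hconst := scConv_primitive_eq_of_ae_eq_zero hf hφ hPφ hφf
    rw [scConv_sub hfa hf hPφ, scConv_comp_sub_right, hconst, hconst t, sub_self]
  have hhalf : Complex.exp (-(Complex.I * ω * a)) = -1 := by
    have hω₀' : (ω : ℂ) ≠ 0 := Complex.ofReal_ne_zero.mpr hω₀
    rw [show -(Complex.I * ω * a) = -(Real.pi * Complex.I) by push_cast [a]; field_simp,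
      Complex.exp_neg, Complex.exp_pi_mul_I, inv_neg, inv_one]
  have hFT := hω _ (hfa.sub hf) (ae_of_all _ hannihilates)
  rw [FT_sub hfa hf, FT_comp_sub_right, hhalf] at hFT
  linear_combination -hFT / 2
end
end

section
/- Let A generate a bounded holomorphic C₀-semigroup on X and let b > 0 be such that ‖R(iλ, A)‖ ≤ M/|λ| for |λ| ≥ b. Then for every t > 0 the improper Riemann integral J(t) = ∫_b^∞ R(iλ, A) sin(λt) dλ exists and sup_{t>0} ‖J(t)‖ < ∞. -/
/-!
Integrating by parts against `-cos (λt) / t`, and using `R'(λ) = -i R(λ)²` (a consequence of the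
resolvent identity), writes `∫_b^c R(iλ) sin(λt) dλ` as boundary terms of size `M / (tλ)` plus an
integral whose integrand is `O(M² / (tλ²))`, hence absolutely convergent on `[b, ∞)`.
For a bound uniform in `t`, split at `a = max b t⁻¹`: on `[b, a]` the bound `|sin λt| ≤ λt` makes
the integrand at most `tM` on an interval of length at most `1/t`, while on `[a, c]` the boundary
terms are at most `M / (ta) ≤ M` and the remaining integral at most `M² / (ta) ≤ M²`.
-/

open MeasureTheory Filter Topology

noncomputable section

variable {X : Type*} [NormedAddCommGroup X] [NormedSpace ℂ X] [CompleteSpace X]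

/-- `T` is a `C₀`-semigroup on `X`. -/
structure IsC0Semigroup (T : ℝ → X →L[ℂ] X) : Prop where
  map_zero : T 0 = 1
  map_add : ∀ s t : ℝ, 0 ≤ s → 0 ≤ t → T (s + t) = (T s).comp (T t)
  strong_cont : ∀ x : X, ContinuousOn (fun t => T t x) (Set.Ici (0 : ℝ))

/-- `A : D(A) → X` is the generator of the semigroup `T`. -/
structure IsGeneratorOf (T : ℝ → X →L[ℂ] X) (D : Submodule ℂ X) (A : D →ₗ[ℂ] X) : Prop where
  mem_iff : ∀ x : X, x ∈ D ↔
    ∃ y : X, Tendsto (fun h : ℝ => h⁻¹ • (T h x - x)) (𝓝[>] 0) (𝓝 y)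
  tendsto : ∀ x : D,
    Tendsto (fun h : ℝ => h⁻¹ • (T h (x : X) - (x : X))) (𝓝[>] 0) (𝓝 (A x))

/-- The semigroup `T` is holomorphic: it extends holomorphically to a sector
`{z ≠ 0, |arg z| < θ}` around the positive real axis. -/
def IsHolomorphicSG (T : ℝ → X →L[ℂ] X) : Prop :=
  ∃ θ : ℝ, 0 < θ ∧ ∃ S : ℂ → X →L[ℂ] X,
    (∀ t : ℝ, 0 < t → S (t : ℂ) = T t) ∧
    DifferentiableOn ℂ S {z : ℂ | z ≠ 0 ∧ |Complex.arg z| < θ}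

/-- `R` is the resolvent `R(μ, A) = (μ - A)⁻¹` of `(D, A)` at `μ`. -/
def IsResolventOf (D : Submodule ℂ X) (A : D →ₗ[ℂ] X) (μ : ℂ) (R : X →L[ℂ] X) : Prop :=
  (∀ x : X, ∃ h : R x ∈ D, μ • R x - A ⟨R x, h⟩ = x) ∧
  ∀ x : D, R (μ • (x : X) - A x) = (x : X)

/-- The resolvent set `ρ(A)` of the (possibly unbounded) operator `(D, A)`. -/
def resolventSetOf (D : Submodule ℂ X) (A : D →ₗ[ℂ] X) : Set ℂ :=
  {μ | ∃ R : X →L[ℂ] X, IsResolventOf D A μ R}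

theorem nonneg_of_norm_le_div {G : Type*} [SeminormedAddGroup G] {v : G} {x M : ℝ}
    (hx : 0 < x) (h : ‖v‖ ≤ M / x) : 0 ≤ M := by
  simpa using (le_div_iff₀ hx).1 ((norm_nonneg v).trans h)

theorem IsResolventOf.sub_eq {E : Type*} [NormedAddCommGroup E] [NormedSpace ℂ E]
    {D : Submodule ℂ E} {A : D →ₗ[ℂ] E} {μ μ' : ℂ} {R₁ R₂ : E →L[ℂ] E}
    (h₁ : IsResolventOf D A μ R₁) (h₂ : IsResolventOf D A μ' R₂) :
    R₁ - R₂ = (μ' - μ) • (R₁ * R₂) := by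
  ext v
  obtain ⟨hy, hyv⟩ := h₂.1 v
  set y : D := ⟨R₂ v, hy⟩
  have hR₁y : R₁ (μ • (y : E) - A y) = y := h₁.2 y
  calc R₁ v - R₂ v = R₁ ((μ' • (y : E) - A y) - (μ • (y : E) - A y)) := by
        rw [map_sub, hR₁y, hyv]
    _ = R₁ ((μ' - μ) • (y : E)) := by rw [sub_smul]; abel_nf
    _ = ((μ' - μ) • (R₁ * R₂)) v := by simp [y]

section ResolventCurve

open Set

variable {𝔸 : Type*} [NormedRing 𝔸] [NormedAlgebra ℂ 𝔸] {R : ℝ → 𝔸} {S : Set ℝ} {C : ℝ}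

theorem continuousOn_of_resolvent_identity
    (hid : ∀ s ∈ S, ∀ s' ∈ S, R s - R s' = (Complex.I * ((s' : ℂ) - s)) • (R s * R s'))
    (hC : ∀ s ∈ S, ‖R s‖ ≤ C) : ContinuousOn R S := by
  refine (LipschitzOnWith.of_dist_le_mul (K := Real.toNNReal (C * C))
    fun s hs s' hs' => ?_).continuousOn
  rw [dist_eq_norm, hid s hs s' hs', norm_smul, norm_mul, Complex.norm_I, one_mul,
    ← Complex.ofReal_sub, Complex.norm_real, Real.dist_eq, abs_sub_comm, Real.norm_eq_abs]
  calc |s' - s| * ‖R s * R s'‖ ≤ |s' - s| * (C * C) := by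
        gcongr
        exact (norm_mul_le _ _).trans (mul_le_mul (hC s hs) (hC s' hs') (norm_nonneg _)
          ((norm_nonneg _).trans (hC s hs)))
    _ ≤ _ := by rw [mul_comm]; gcongr; exact Real.le_coe_toNNReal _

theorem hasDerivWithinAt_of_resolvent_identity
    (hid : ∀ s ∈ S, ∀ s' ∈ S, R s - R s' = (Complex.I * ((s' : ℂ) - s)) • (R s * R s'))
    (hC : ∀ s ∈ S, ‖R s‖ ≤ C) {s : ℝ} (hs : s ∈ S) :
    HasDerivWithinAt R (-Complex.I • (R s * R s)) S s := by
  have hcont : Tendsto (fun y => -Complex.I • (R y * R s)) (𝓝[S \ {s}] s)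
      (𝓝 (-Complex.I • (R s * R s))) :=
    (((continuousOn_of_resolvent_identity hid hC s hs).mono sdiff_subset).mul
      tendsto_const_nhds).const_smul _
  rw [hasDerivWithinAt_iff_tendsto_slope]
  refine hcont.congr' (eventually_nhdsWithin_of_forall fun y hy => ?_)
  have hys : (y : ℂ) - s ≠ 0 := sub_ne_zero.2 (by exact_mod_cast hy.2)
  rw [slope_def_module, hid y hy.1 s hs, ← Complex.coe_smul, smul_smul]
  congr 1
  push_cast
  field_simp
  ring

end ResolventCurve

theorem mul_rpow_neg_two_eqOn_div_sq (N : ℝ) :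
    Set.EqOn (fun x : ℝ => N * x ^ (-2 : ℝ)) (fun x => N / x ^ 2) (Set.Ioi 0) := fun x hx => by
  show N * x ^ (-2 : ℝ) = N / x ^ 2
  rw [Real.rpow_neg (le_of_lt hx), Real.rpow_two, div_eq_mul_inv]

theorem integrableOn_Ioi_div_sq (N : ℝ) {a : ℝ} (ha : 0 < a) :
    IntegrableOn (fun x : ℝ => N / x ^ 2) (Set.Ioi a) :=
  IntegrableOn.congr_fun
    ((integrableOn_Ioi_rpow_of_lt (by norm_num : (-2 : ℝ) < -1) ha).const_mul N)
    ((mul_rpow_neg_two_eqOn_div_sq N).mono (Set.Ioi_subset_Ioi ha.le)) measurableSet_Ioi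

theorem integral_Ioi_div_sq (N : ℝ) {a : ℝ} (ha : 0 < a) :
    ∫ x in Set.Ioi a, N / x ^ 2 = N / a := by
  rw [← setIntegral_congr_fun measurableSet_Ioi
    ((mul_rpow_neg_two_eqOn_div_sq N).mono (Set.Ioi_subset_Ioi ha.le)), integral_const_mul,
    integral_Ioi_rpow_of_lt (by norm_num) ha]
  norm_num [Real.rpow_neg_one, div_eq_mul_inv]

section SineIntegral

open Set

variable {E : Type*} [NormedAddCommGroup E] {f f' g : ℝ → E} {a b c t M N : ℝ}

theorem integrableOn_Ioi_of_norm_le_div_sq (ha : 0 < a) (hg : ContinuousOn g (Ici a))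
    (hN : ∀ x ∈ Ici a, ‖g x‖ ≤ N / x ^ 2) : IntegrableOn g (Ioi a) :=
  (integrableOn_Ioi_div_sq N ha).mono' ((hg.mono Ioi_subset_Ici_self).aestronglyMeasurable
    measurableSet_Ioi) ((ae_restrict_iff' measurableSet_Ioi).2 (ae_of_all _ fun x hx =>
      hN x (mem_Ici_of_Ioi hx)))

variable [NormedSpace ℝ E]

theorem norm_cos_div_smul_le (ht : 0 < t) (x : ℝ) {v : E} {K : ℝ} (hv : ‖v‖ ≤ K) :
    ‖(Real.cos (x * t) / t) • v‖ ≤ K / t := by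
  rw [norm_smul, Real.norm_eq_abs, abs_div, abs_of_pos ht, div_mul_eq_mul_div]
  gcongr
  exact mul_le_of_le_one_left (norm_nonneg v) (Real.abs_cos_le_one _) |>.trans hv

theorem norm_integral_sin_smul_le_mul_sub (ha : 0 < a) (hac : a ≤ c) (ht : 0 ≤ t)
    (hfM : ∀ x ∈ Ioc a c, ‖f x‖ ≤ M / x) :
    ‖∫ x in a..c, Real.sin (x * t) • f x‖ ≤ t * M * (c - a) := by
  have hpt : ∀ x ∈ uIoc a c, ‖Real.sin (x * t) • f x‖ ≤ t * M := by
    intro x hx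
    rw [uIoc_of_le hac] at hx
    have hx0 : 0 < x := ha.trans hx.1
    calc ‖Real.sin (x * t) • f x‖ ≤ (x * t) * (M / x) := by
          rw [norm_smul, Real.norm_eq_abs]
          refine mul_le_mul ?_ (hfM x hx) (norm_nonneg _) (by positivity)
          exact Real.abs_sin_le_abs.trans_eq (abs_of_nonneg (by positivity))
      _ = t * M := by field_simp
  simpa [abs_of_nonneg (sub_nonneg.2 hac)] using
    intervalIntegral.norm_integral_le_of_norm_le_const hpt

theorem norm_integral_le_of_norm_le_div_sq (ha : 0 < a) (hac : a ≤ c)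
    (hg : ContinuousOn g (Ici a)) (hN : ∀ x ∈ Ici a, ‖g x‖ ≤ N / x ^ 2) :
    ‖∫ x in a..c, g x‖ ≤ N / a := by
  have hgi := integrableOn_Ioi_of_norm_le_div_sq ha hg hN
  calc ‖∫ x in a..c, g x‖ ≤ ∫ x in Ioc a c, ‖g x‖ := by
        rw [intervalIntegral.integral_of_le hac]; exact norm_integral_le_integral_norm _
    _ ≤ ∫ x in Ioi a, ‖g x‖ := setIntegral_mono_set hgi.norm
        (ae_of_all _ fun _ => norm_nonneg _) Ioc_subset_Ioi_self.eventuallyLE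
    _ ≤ ∫ x in Ioi a, N / x ^ 2 := setIntegral_mono_on hgi.norm (integrableOn_Ioi_div_sq N ha)
        measurableSet_Ioi fun x hx => hN x (mem_Ici_of_Ioi hx)
    _ = N / a := integral_Ioi_div_sq N ha

theorem integral_sin_smul_eq [CompleteSpace E] (ht : t ≠ 0) (hac : a ≤ c)
    (hf : ∀ x ∈ Icc a c, HasDerivWithinAt f (f' x) (Icc a c) x)
    (hf' : ContinuousOn f' (Icc a c)) :
    ∫ x in a..c, Real.sin (x * t) • f x =
      (Real.cos (a * t) / t) • f a - (Real.cos (c * t) / t) • f c +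
        ∫ x in a..c, (Real.cos (x * t) / t) • f' x := by
  have hu : ∀ x, HasDerivAt (fun y => -Real.cos (y * t) / t) (Real.sin (x * t)) x := fun x =>
    ((hasDerivAt_mul_const t).cos.neg.div_const t).congr_deriv
      (by rw [neg_mul, neg_neg, mul_div_cancel_right₀ _ ht])
  have hfc : ContinuousOn f (uIcc a c) := by
    rw [uIcc_of_le hac]; exact fun x hx => (hf x hx).continuousWithinAt
  have hf'i : IntervalIntegrable f' volume a c := hf'.intervalIntegrable_of_Icc hac
  have hfd : ∀ x ∈ Ioo (min a c) (max a c), HasDerivWithinAt f (f' x) (Ioi x) x := by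
    rw [min_eq_left hac, max_eq_right hac]
    exact fun x hx => ((hf x (Ioo_subset_Icc_self hx)).hasDerivAt
      (Icc_mem_nhds hx.1 hx.2)).hasDerivWithinAt
  have hibp := intervalIntegral.integral_deriv_smul_eq_sub_of_hasDeriv_right
    (by fun_prop) hfc (fun x _ => (hu x).hasDerivWithinAt) hfd
    ((by fun_prop : Continuous fun x => Real.sin (x * t)).intervalIntegrable _ _) hf'i
  have hsinf : IntervalIntegrable (fun x => Real.sin (x * t) • f x) volume a c :=
    (ContinuousOn.smul (by fun_prop) hfc).intervalIntegrable
  rw [intervalIntegral.integral_add hsinf (hf'i.continuousOn_smul (by fun_prop))] at hibp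
  simp only [neg_div, neg_smul, intervalIntegral.integral_neg] at hibp
  rw [← sub_eq_zero] at hibp ⊢
  rw [← hibp]
  abel

variable [CompleteSpace E]

theorem tendsto_integral_sin_smul (hb : 0 < b) (ht : 0 < t)
    (hf : ∀ x ∈ Ici b, HasDerivWithinAt f (f' x) (Ici b) x) (hf' : ContinuousOn f' (Ici b))
    (hfM : ∀ x ∈ Ici b, ‖f x‖ ≤ M / x) (hf'N : ∀ x ∈ Ici b, ‖f' x‖ ≤ N / x ^ 2) :
    Tendsto (fun c => ∫ x in b..c, Real.sin (x * t) • f x) atTop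
      (𝓝 ((Real.cos (b * t) / t) • f b + ∫ x in Ioi b, (Real.cos (x * t) / t) • f' x)) := by
  have hboundary : Tendsto (fun c => (Real.cos (c * t) / t) • f c) atTop (𝓝 0) := by
    refine squeeze_zero_norm' ?_ (by simpa using tendsto_inv_atTop_zero.const_mul (M / t))
    filter_upwards [eventually_ge_atTop b] with c hc
    exact (norm_cos_div_smul_le ht c (hfM c hc)).trans_eq (by ring)
  have htail := intervalIntegral_tendsto_integral_Ioi b
    (integrableOn_Ioi_of_norm_le_div_sq hb (ContinuousOn.smul (by fun_prop) hf')
      fun x hx => (norm_cos_div_smul_le ht x (hf'N x hx)).trans_eq (div_right_comm _ _ _))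
    tendsto_id
  have hibp : ∀ᶠ c in atTop, (Real.cos (b * t) / t) • f b - (Real.cos (c * t) / t) • f c +
      ∫ x in b..c, (Real.cos (x * t) / t) • f' x = ∫ x in b..c, Real.sin (x * t) • f x := by
    filter_upwards [eventually_ge_atTop b] with c hc
    exact (integral_sin_smul_eq ht.ne' hc (fun x hx => (hf x hx.1).mono Icc_subset_Ici_self)
      (hf'.mono Icc_subset_Ici_self)).symm
  simpa using ((tendsto_const_nhds.sub hboundary).add htail).congr' hibp

theorem norm_integral_sin_smul_le_of_one_le_mul (hb : 0 < b) (hba : b ≤ a) (ht : 0 < t)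
    (hta : 1 ≤ t * a) (hac : a ≤ c) (hf : ∀ x ∈ Ici b, HasDerivWithinAt f (f' x) (Ici b) x)
    (hf' : ContinuousOn f' (Ici b)) (hfM : ∀ x ∈ Ici b, ‖f x‖ ≤ M / x)
    (hf'N : ∀ x ∈ Ici b, ‖f' x‖ ≤ N / x ^ 2) :
    ‖∫ x in a..c, Real.sin (x * t) • f x‖ ≤ 2 * M + N := by
  have ha : 0 < a := hb.trans_le hba
  have hM : 0 ≤ M := nonneg_of_norm_le_div hb (hfM b self_mem_Ici)
  have hN : 0 ≤ N := nonneg_of_norm_le_div (by positivity) (hf'N b self_mem_Ici)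
  have hIcc : Icc a c ⊆ Ici b := Icc_subset_Ici_self.trans (Ici_subset_Ici.2 hba)
  have hboundary : ∀ x ∈ Ici a, ‖(Real.cos (x * t) / t) • f x‖ ≤ M := fun x hx => by
    calc ‖(Real.cos (x * t) / t) • f x‖ ≤ M / x / t :=
          norm_cos_div_smul_le ht x (hfM x (hba.trans hx))
      _ = M / (t * x) := by rw [div_div, mul_comm]
      _ ≤ M := div_le_self hM (hta.trans (by gcongr; exact hx))
  have htail : ‖∫ x in a..c, (Real.cos (x * t) / t) • f' x‖ ≤ N / t / a :=
    norm_integral_le_of_norm_le_div_sq ha hac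
      (ContinuousOn.smul (by fun_prop) (hf'.mono (Ici_subset_Ici.2 hba))) fun x hx =>
        (norm_cos_div_smul_le ht x (hf'N x (hba.trans hx))).trans_eq (div_right_comm _ _ _)
  rw [integral_sin_smul_eq ht.ne' hac (fun x hx => (hf x (hIcc hx)).mono hIcc) (hf'.mono hIcc)]
  calc _ ≤ ‖(Real.cos (a * t) / t) • f a‖ + ‖(Real.cos (c * t) / t) • f c‖ +
        ‖∫ x in a..c, (Real.cos (x * t) / t) • f' x‖ :=
          (norm_add_le _ _).trans (by gcongr; exact norm_sub_le _ _)
    _ ≤ M + M + N / (t * a) := by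
        gcongr
        exacts [hboundary a self_mem_Ici, hboundary c hac, htail.trans_eq (div_div _ _ _)]
    _ ≤ 2 * M + N := by linarith [div_le_self hN hta]

theorem norm_integral_sin_smul_le_of_max_le (hb : 0 < b) (ht : 0 < t) (hc : max b t⁻¹ ≤ c)
    (hf : ∀ x ∈ Ici b, HasDerivWithinAt f (f' x) (Ici b) x) (hf' : ContinuousOn f' (Ici b))
    (hfM : ∀ x ∈ Ici b, ‖f x‖ ≤ M / x) (hf'N : ∀ x ∈ Ici b, ‖f' x‖ ≤ N / x ^ 2) :
    ‖∫ x in b..c, Real.sin (x * t) • f x‖ ≤ 3 * M + N := by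
  set a := max b t⁻¹
  have hba : b ≤ a := le_max_left _ _
  have hab : a - b ≤ t⁻¹ := sub_le_iff_le_add.2 <|
    max_le (le_add_of_nonneg_left (by positivity)) (le_add_of_nonneg_right hb.le)
  have hM : 0 ≤ M := nonneg_of_norm_le_div hb (hfM b self_mem_Ici)
  have hsin : ContinuousOn (fun x => Real.sin (x * t) • f x) (Ici b) :=
    ContinuousOn.smul (by fun_prop) fun x hx => (hf x hx).continuousWithinAt
  have hint : ∀ u v, b ≤ u → u ≤ v →
      IntervalIntegrable (fun x => Real.sin (x * t) • f x) volume u v := fun u v hbu huv =>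
    (hsin.mono (Icc_subset_Ici_self.trans (Ici_subset_Ici.2 hbu))).intervalIntegrable_of_Icc huv
  have hnear : ‖∫ x in b..a, Real.sin (x * t) • f x‖ ≤ M :=
    calc _ ≤ t * M * (a - b) := norm_integral_sin_smul_le_mul_sub hb hba ht.le
          fun x hx => hfM x hx.1.le
      _ ≤ t * M * t⁻¹ := by gcongr
      _ = M := by field_simp
  have hfar := norm_integral_sin_smul_le_of_one_le_mul hb hba ht
    ((mul_inv_cancel₀ ht.ne').symm.trans_le (by gcongr; exact le_max_right _ _)) hc hf hf' hfM hf'N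
  rw [← intervalIntegral.integral_add_adjacent_intervals (hint b a le_rfl hba) (hint a c hba hc)]
  exact (norm_add_le _ _).trans (by linarith)

theorem exists_tendsto_integral_sin_smul_and_bounded (hb : 0 < b)
    (hf : ∀ x ∈ Ici b, HasDerivWithinAt f (f' x) (Ici b) x) (hf' : ContinuousOn f' (Ici b))
    (hfM : ∀ x ∈ Ici b, ‖f x‖ ≤ M / x) (hf'N : ∀ x ∈ Ici b, ‖f' x‖ ≤ N / x ^ 2) :
    ∃ J : ℝ → E, (∀ t : ℝ, 0 < t →
        Tendsto (fun c => ∫ x in b..c, Real.sin (x * t) • f x) atTop (𝓝 (J t))) ∧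
      ∃ C : ℝ, ∀ t : ℝ, 0 < t → ‖J t‖ ≤ C :=
  ⟨fun t => (Real.cos (b * t) / t) • f b + ∫ x in Ioi b, (Real.cos (x * t) / t) • f' x,
    fun _ ht => tendsto_integral_sin_smul hb ht hf hf' hfM hf'N, 3 * M + N, fun t ht =>
      le_of_tendsto (tendsto_integral_sin_smul hb ht hf hf' hfM hf'N).norm <|
        eventually_atTop.2 ⟨max b t⁻¹, fun _ hc =>
          norm_integral_sin_smul_le_of_max_le hb ht hc hf hf' hfM hf'N⟩⟩

end SineIntegral

theorem sine_resolvent_integral_exists_and_bounded_general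
    (D : Submodule ℂ X) (A : D →ₗ[ℂ] X)
    (b M : ℝ) (hb : 0 < b)
    (R : ℝ → X →L[ℂ] X)
    (hR : ∀ s : ℝ, b ≤ |s| → IsResolventOf D A (Complex.I * s) (R s))
    (hRb : ∀ s : ℝ, b ≤ |s| → ‖R s‖ ≤ M / |s|) :
    ∃ J : ℝ → X →L[ℂ] X,
      (∀ t : ℝ, 0 < t →
        Tendsto (fun c : ℝ => ∫ l in b..c, Real.sin (l * t) • R l) atTop (𝓝 (J t))) ∧
      ∃ C : ℝ, ∀ t : ℝ, 0 < t → ‖J t‖ ≤ C := by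
  have habs : ∀ s ∈ Set.Ici b, b ≤ |s| := fun s hs => le_trans hs (le_abs_self s)
  have hRM : ∀ s ∈ Set.Ici b, ‖R s‖ ≤ M / s := fun s hs => by
    simpa [abs_of_pos (hb.trans_le hs)] using hRb s (habs s hs)
  have hM : 0 ≤ M := nonneg_of_norm_le_div hb (hRM b Set.self_mem_Ici)
  have hRC : ∀ s ∈ Set.Ici b, ‖R s‖ ≤ M / b := fun s hs =>
    (hRM s hs).trans (div_le_div_of_nonneg_left hM hb hs)
  have hid : ∀ s ∈ Set.Ici b, ∀ s' ∈ Set.Ici b,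
      R s - R s' = (Complex.I * ((s' : ℂ) - s)) • (R s * R s') := fun s hs s' hs' => by
    rw [(hR s (habs s hs)).sub_eq (hR s' (habs s' hs')), mul_sub]
  refine exists_tendsto_integral_sin_smul_and_bounded (N := M ^ 2) hb
    (fun s hs => hasDerivWithinAt_of_resolvent_identity hid hRC hs)
    (by have := continuousOn_of_resolvent_identity hid hRC; fun_prop) hRM fun s hs => ?_
  calc ‖-Complex.I • (R s * R s)‖ ≤ ‖R s‖ * ‖R s‖ := by
        rw [norm_smul, norm_neg, Complex.norm_I, one_mul]; exact norm_mul_le _ _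
    _ ≤ M / s * (M / s) := mul_self_le_mul_self (norm_nonneg _) (hRM s hs)
    _ = M ^ 2 / s ^ 2 := by ring

/-- Lemma 3.4(ii): `J(t) = ∫_b^∞ R(iλ,A) sin(λt) dλ` exists as an improper Riemann
integral for every `t > 0` and is uniformly bounded on `(0, ∞)`. -/
theorem sine_resolvent_integral_exists_and_bounded
    (T : ℝ → X →L[ℂ] X) (hT : IsC0Semigroup T) (hol : IsHolomorphicSG T)
    (hbdd : ∃ K : ℝ, ∀ t : ℝ, 0 ≤ t → ‖T t‖ ≤ K)
    (D : Submodule ℂ X) (A : D →ₗ[ℂ] X) (hA : IsGeneratorOf T D A)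
    (b M : ℝ) (hb : 0 < b)
    (R : ℝ → X →L[ℂ] X)
    (hR : ∀ s : ℝ, b ≤ |s| → IsResolventOf D A (Complex.I * s) (R s))
    (hRb : ∀ s : ℝ, b ≤ |s| → ‖R s‖ ≤ M / |s|) :
    ∃ J : ℝ → X →L[ℂ] X,
      (∀ t : ℝ, 0 < t →
        Tendsto (fun c : ℝ => ∫ l in b..c, Real.sin (l * t) • R l) atTop (𝓝 (J t))) ∧
      ∃ C : ℝ, ∀ t : ℝ, 0 < t → ‖J t‖ ≤ C :=
  sine_resolvent_integral_exists_and_bounded_general D A b M hb R hR hRb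

end
end

section
/- Let A generate a bounded holomorphic C₀-semigroup on X and let b > 0 with ‖R(iλ, A)‖ ≤ M/|λ| for |λ| ≥ b. Then for every t with 0 < t < π/(2b), the improper Riemann integral I(t) = ∫_b^∞ R(iλ, A) cos(λt) dλ exists and ‖I(t)‖ = O(|ln t|) as t → 0⁺. -/
/-!
By the resolvent identity, `λ ↦ R(iλ, A)` is differentiable on `(b, ∞)` with derivative
`-i R(iλ, A)²`, so one integration by parts gives
`∫_b^c cos(λt) R(iλ, A) dλ = [sin(λt)/t · R(iλ, A)]_b^c + i ∫_b^c sin(λt)/t · R(iλ, A)² dλ`.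
As `‖R(iλ, A)‖ ≤ M/λ`, the boundary term at `c` vanishes as `c → ∞` and the new integrand is
`O(1/(tλ²))`, so the integral converges. Splitting the last integral at `λ = 1/t` and using
`|sin(λt)| ≤ λt` below and `|sin(λt)| ≤ 1` above bounds it by `M² (log(1/(bt)) + 1)`.
-/

open MeasureTheory Filter Topology

noncomputable section

variable {X : Type*} [NormedAddCommGroup X] [NormedSpace ℂ X] [CompleteSpace X]

omit [CompleteSpace X] in
theorem IsResolventOf.sub_eq_smul_mul {D : Submodule ℂ X} {A : D →ₗ[ℂ] X} {μ ν : ℂ}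
    {R₁ R₂ : X →L[ℂ] X} (h₁ : IsResolventOf D A μ R₁) (h₂ : IsResolventOf D A ν R₂) :
    R₂ - R₁ = (μ - ν) • (R₁ * R₂) := by
  ext x
  obtain ⟨hx, hνx⟩ := h₂.1 x
  have h := h₁.2 ⟨R₂ x, hx⟩
  have hsplit : μ • R₂ x - A ⟨R₂ x, hx⟩ = (μ - ν) • R₂ x + x :=
    calc μ • R₂ x - A ⟨R₂ x, hx⟩ = (μ - ν) • R₂ x + (ν • R₂ x - A ⟨R₂ x, hx⟩) := by
          rw [sub_smul]; abel
      _ = (μ - ν) • R₂ x + x := by rw [hνx]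
  rw [Submodule.coe_mk, hsplit, map_add, map_smul] at h
  rw [sub_apply, smul_apply, mul_apply_eq_comp]
  exact (eq_sub_of_add_eq h).symm

theorem abs_sin_mul_div_le {l t : ℝ} (hl : 0 ≤ l) (ht : 0 < t) : |Real.sin (l * t)| / t ≤ l :=
  (div_le_iff₀ ht).2 (Real.abs_sin_le_abs.trans_eq (abs_of_nonneg (mul_nonneg hl ht.le)))

theorem abs_sin_div_le_inv {x t : ℝ} (ht : 0 < t) : |Real.sin x| / t ≤ t⁻¹ := by
  rw [div_eq_mul_inv]
  exact mul_le_of_le_one_left (inv_nonneg.2 ht.le) (Real.abs_sin_le_one x)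

/-- `R λ` plays the role of `R(iλ, A)` for `λ ≥ b`. -/
structure IsDecayingPseudoResolvent {𝔸 : Type*} [NormedRing 𝔸] [NormedAlgebra ℂ 𝔸]
    (R : ℝ → 𝔸) (b M : ℝ) : Prop where
  sub_eq : ∀ s l, b ≤ s → b ≤ l → R l - R s = (Complex.I * (s - l : ℂ)) • (R s * R l)
  norm_le : ∀ l, b ≤ l → ‖R l‖ ≤ M / l

/-- The value of `∫_b^∞ cos(λt) R λ dλ` after one integration by parts. -/
def cosIntegral {𝔸 : Type*} [NormedRing 𝔸] [NormedAlgebra ℂ 𝔸]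
    (R : ℝ → 𝔸) (b t : ℝ) : 𝔸 :=
  -((Real.sin (b * t) / t) • R b) +
    Complex.I • ∫ l in Set.Ioi b, (Real.sin (l * t) / t) • (R l * R l)

namespace IsDecayingPseudoResolvent

variable {𝔸 : Type*} [NormedRing 𝔸] [NormedAlgebra ℂ 𝔸] {R : ℝ → 𝔸} {b M t : ℝ}

theorem nonneg (h : IsDecayingPseudoResolvent R b M) (hb : 0 < b) : 0 ≤ M := by
  simpa using (le_div_iff₀ hb).1 ((norm_nonneg _).trans (h.norm_le b le_rfl))

theorem norm_le_div_left (h : IsDecayingPseudoResolvent R b M) (hb : 0 < b) {l : ℝ}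
    (hl : b ≤ l) : ‖R l‖ ≤ M / b :=
  (h.norm_le l hl).trans (div_le_div_of_nonneg_left (h.nonneg hb) hb hl)

theorem norm_sub_le (h : IsDecayingPseudoResolvent R b M) (hb : 0 < b) {s l : ℝ}
    (hs : b ≤ s) (hl : b ≤ l) : ‖R l - R s‖ ≤ (M / b) ^ 2 * |l - s| := by
  rw [h.sub_eq s l hs hl, norm_smul, norm_mul, Complex.norm_I, one_mul, ← Complex.ofReal_sub,
    Complex.norm_real, Real.norm_eq_abs, abs_sub_comm, mul_comm, sq]
  gcongr
  exact (norm_mul_le _ _).trans (mul_le_mul (h.norm_le_div_left hb hs)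
    (h.norm_le_div_left hb hl) (norm_nonneg _) (div_nonneg (h.nonneg hb) hb.le))

theorem continuousOn (h : IsDecayingPseudoResolvent R b M) (hb : 0 < b) :
    ContinuousOn R (Set.Ici b) :=
  (LipschitzOnWith.of_dist_le' fun l hl s hs => by
    rw [Real.dist_eq, dist_eq_norm]; exact h.norm_sub_le hb hs hl).continuousOn

theorem hasDerivAt (h : IsDecayingPseudoResolvent R b M) (hb : 0 < b) {l : ℝ} (hl : b < l) :
    HasDerivAt R (-(Complex.I • (R l * R l))) l := by
  rw [hasDerivAt_iff_tendsto_slope]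
  have hcont : ContinuousAt R l := (h.continuousOn hb).continuousAt (Ici_mem_nhds hl)
  have hlim : Tendsto (fun s => -(Complex.I • (R l * R s))) (𝓝[≠] l)
      (𝓝 (-(Complex.I • (R l * R l)))) :=
    ((tendsto_const_nhds.mul hcont.tendsto).const_smul Complex.I).neg.mono_left
      nhdsWithin_le_nhds
  refine hlim.congr' ?_
  filter_upwards [nhdsWithin_le_nhds (Ici_mem_nhds hl), self_mem_nhdsWithin] with s hs hsl
  have hsl' : (s - l : ℂ) ≠ 0 := by exact_mod_cast sub_ne_zero.2 hsl
  rw [slope_def_module, h.sub_eq l s hl.le hs, ← smul_assoc, ← neg_smul]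
  congr 1
  rw [Complex.real_smul, Complex.ofReal_inv, Complex.ofReal_sub]
  field_simp
  ring

theorem norm_sin_div_smul_le (h : IsDecayingPseudoResolvent R b M) (hb : 0 < b) (ht : 0 < t)
    {l : ℝ} (hl : b ≤ l) : ‖(Real.sin (l * t) / t) • R l‖ ≤ M := by
  have hl₀ : 0 < l := hb.trans_le hl
  rw [norm_smul, Real.norm_eq_abs, abs_div, abs_of_pos ht]
  calc |Real.sin (l * t)| / t * ‖R l‖ ≤ l * (M / l) :=
        mul_le_mul (abs_sin_mul_div_le hl₀.le ht) (h.norm_le l hl) (norm_nonneg _) hl₀.le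
    _ = M := by field_simp

theorem tendsto_sin_div_smul_atTop (h : IsDecayingPseudoResolvent R b M) (ht : 0 < t) :
    Tendsto (fun c => (Real.sin (c * t) / t) • R c) atTop (𝓝 0) := by
  refine squeeze_zero_norm' (a := fun c => t⁻¹ * (M / c)) ?_ ?_
  · filter_upwards [eventually_ge_atTop b] with c hc
    rw [norm_smul, Real.norm_eq_abs, abs_div, abs_of_pos ht]
    exact mul_le_mul (abs_sin_div_le_inv ht) (h.norm_le c hc) (norm_nonneg _)
      (inv_nonneg.2 ht.le)
  · simpa using (tendsto_const_nhds.div_atTop tendsto_id).const_mul t⁻¹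

theorem norm_sin_div_smul_mul_self_le (h : IsDecayingPseudoResolvent R b M) (ht : 0 < t)
    {l : ℝ} (hl : b ≤ l) :
    ‖(Real.sin (l * t) / t) • (R l * R l)‖ ≤ |Real.sin (l * t)| / t * (M / l) ^ 2 := by
  rw [norm_smul, Real.norm_eq_abs, abs_div, abs_of_pos ht, sq]
  gcongr
  exact (norm_mul_le _ _).trans (mul_le_mul (h.norm_le l hl) (h.norm_le l hl) (norm_nonneg _)
    ((norm_nonneg _).trans (h.norm_le l hl)))

theorem integrableOn_sin_div_smul_mul_self (h : IsDecayingPseudoResolvent R b M) (hb : 0 < b)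
    (ht : 0 < t) :
    IntegrableOn (fun l => (Real.sin (l * t) / t) • (R l * R l)) (Set.Ioi b) := by
  have hcont : ContinuousOn (fun l => (Real.sin (l * t) / t) • (R l * R l)) (Set.Ioi b) :=
    (by fun_prop : Continuous fun l : ℝ => Real.sin (l * t) / t).continuousOn.smul
      (((h.continuousOn hb).mul (h.continuousOn hb)).mono Set.Ioi_subset_Ici_self)
  refine Integrable.mono'
    ((integrableOn_Ioi_rpow_of_lt (by norm_num : (-2 : ℝ) < -1) hb).const_mul (M ^ 2 / t))
    (hcont.aestronglyMeasurable measurableSet_Ioi) ?_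
  filter_upwards [ae_restrict_mem measurableSet_Ioi] with l hl
  have hl₀ : 0 < l := hb.trans hl
  calc ‖(Real.sin (l * t) / t) • (R l * R l)‖ ≤ |Real.sin (l * t)| / t * (M / l) ^ 2 :=
        h.norm_sin_div_smul_mul_self_le ht hl.le
    _ ≤ t⁻¹ * (M / l) ^ 2 := by gcongr; exact abs_sin_div_le_inv ht
    _ = M ^ 2 / t * l ^ (-2 : ℝ) := by
        rw [Real.rpow_neg hl₀.le, Real.rpow_two]; field_simp

theorem norm_setIntegral_Ioc_inv_le (h : IsDecayingPseudoResolvent R b M) (hb : 0 < b)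
    (ht : 0 < t) (hbt : b ≤ t⁻¹) :
    ‖∫ l in Set.Ioc b t⁻¹, (Real.sin (l * t) / t) • (R l * R l)‖ ≤
      M ^ 2 * Real.log (t⁻¹ / b) := by
  have hint : IntegrableOn (fun l : ℝ => M ^ 2 * l⁻¹) (Set.Ioc b t⁻¹) :=
    ((continuousOn_const.mul (continuousOn_inv₀.mono fun l hl => (hb.trans_le hl.1).ne')
      ).integrableOn_Icc).mono_set Set.Ioc_subset_Icc_self
  calc _ ≤ ∫ l in Set.Ioc b t⁻¹, M ^ 2 * l⁻¹ := by
        refine norm_integral_le_of_norm_le hint ?_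
        filter_upwards [ae_restrict_mem measurableSet_Ioc] with l hl
        have hl₀ : 0 < l := hb.trans hl.1
        calc _ ≤ |Real.sin (l * t)| / t * (M / l) ^ 2 :=
              h.norm_sin_div_smul_mul_self_le ht hl.1.le
          _ ≤ l * (M / l) ^ 2 := by gcongr; exact abs_sin_mul_div_le hl₀.le ht
          _ = M ^ 2 * l⁻¹ := by field_simp
    _ = M ^ 2 * Real.log (t⁻¹ / b) := by
        rw [← intervalIntegral.integral_of_le hbt, intervalIntegral.integral_const_mul,
          integral_inv (Set.notMem_uIcc_of_lt hb (inv_pos.2 ht))]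

theorem norm_setIntegral_Ioi_inv_le (h : IsDecayingPseudoResolvent R b M) (ht : 0 < t)
    (hbt : b ≤ t⁻¹) :
    ‖∫ l in Set.Ioi t⁻¹, (Real.sin (l * t) / t) • (R l * R l)‖ ≤ M ^ 2 := by
  calc _ ≤ ∫ l in Set.Ioi t⁻¹, M ^ 2 / t * l ^ (-2 : ℝ) := by
        refine norm_integral_le_of_norm_le
          ((integrableOn_Ioi_rpow_of_lt (by norm_num) (inv_pos.2 ht)).const_mul _) ?_
        filter_upwards [ae_restrict_mem measurableSet_Ioi] with l hl
        have hl₀ : 0 < l := (inv_pos.2 ht).trans hl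
        calc _ ≤ |Real.sin (l * t)| / t * (M / l) ^ 2 :=
              h.norm_sin_div_smul_mul_self_le ht (hbt.trans hl.le)
          _ ≤ t⁻¹ * (M / l) ^ 2 := by gcongr; exact abs_sin_div_le_inv ht
          _ = M ^ 2 / t * l ^ (-2 : ℝ) := by
              rw [Real.rpow_neg hl₀.le, Real.rpow_two]; field_simp
    _ = M ^ 2 := by
        rw [integral_const_mul, integral_Ioi_rpow_of_lt (by norm_num) (inv_pos.2 ht)]
        norm_num [Real.rpow_neg_one]
        field_simp

theorem norm_setIntegral_Ioi_le (h : IsDecayingPseudoResolvent R b M) (hb : 0 < b)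
    (ht : 0 < t) (hbt : b ≤ t⁻¹) :
    ‖∫ l in Set.Ioi b, (Real.sin (l * t) / t) • (R l * R l)‖ ≤
      M ^ 2 * (Real.log (t⁻¹ / b) + 1) := by
  have hint := h.integrableOn_sin_div_smul_mul_self hb ht
  rw [← Set.Ioc_union_Ioi_eq_Ioi hbt, setIntegral_union (Set.Ioc_disjoint_Ioi le_rfl)
    measurableSet_Ioi (hint.mono_set Set.Ioc_subset_Ioi_self)
    (hint.mono_set (Set.Ioi_subset_Ioi hbt))]
  calc _ ≤ _ := norm_add_le _ _
    _ ≤ M ^ 2 * Real.log (t⁻¹ / b) + M ^ 2 :=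
        add_le_add (h.norm_setIntegral_Ioc_inv_le hb ht hbt)
          (h.norm_setIntegral_Ioi_inv_le ht hbt)
    _ = M ^ 2 * (Real.log (t⁻¹ / b) + 1) := by ring

theorem norm_cosIntegral_le (h : IsDecayingPseudoResolvent R b M) (hb : 0 < b) (ht : 0 < t)
    (hbt : b ≤ t⁻¹) : ‖cosIntegral R b t‖ ≤ M + M ^ 2 * (Real.log (t⁻¹ / b) + 1) := by
  calc _ ≤ ‖(Real.sin (b * t) / t) • R b‖ +
        ‖∫ l in Set.Ioi b, (Real.sin (l * t) / t) • (R l * R l)‖ := by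
        refine (norm_add_le _ _).trans_eq ?_
        rw [norm_neg, norm_smul Complex.I, Complex.norm_I, one_mul]
    _ ≤ _ :=
        add_le_add (h.norm_sin_div_smul_le hb ht le_rfl) (h.norm_setIntegral_Ioi_le hb ht hbt)

variable [CompleteSpace 𝔸]

theorem integral_cos_smul_eq (h : IsDecayingPseudoResolvent R b M) (hb : 0 < b) (ht : 0 < t)
    {c : ℝ} (hc : b ≤ c) :
    ∫ l in b..c, Real.cos (l * t) • R l =
      (Real.sin (c * t) / t) • R c - (Real.sin (b * t) / t) • R b +
        Complex.I • ∫ l in b..c, (Real.sin (l * t) / t) • (R l * R l) := by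
  have hR : ContinuousOn R (Set.uIcc b c) :=
    (h.continuousOn hb).mono (Set.uIcc_of_le hc ▸ Set.Icc_subset_Ici_self)
  have hsin (l : ℝ) : HasDerivAt (fun l => Real.sin (l * t) / t) (Real.cos (l * t)) l := by
    simpa [ht.ne'] using ((hasDerivAt_mul_const t).sin.div_const t : HasDerivAt _ _ l)
  have hparts := intervalIntegral.integral_smul_deriv_eq_deriv_smul_of_hasDerivAt
    (fun l _ => (hsin l).continuousAt.continuousWithinAt) hR (fun l _ => hsin l)
    (fun l hl => h.hasDerivAt hb ((min_eq_left hc).symm.trans_lt hl.1))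
    ((by fun_prop : Continuous fun l : ℝ => Real.cos (l * t)).intervalIntegrable _ _)
    ((hR.mul hR).const_smul Complex.I).neg.intervalIntegrable
  have hpull : ∫ l in b..c, (Real.sin (l * t) / t) • -(Complex.I • (R l * R l)) =
      -(Complex.I • ∫ l in b..c, (Real.sin (l * t) / t) • (R l * R l)) := by
    simp_rw [smul_neg, smul_comm _ Complex.I]
    rw [intervalIntegral.integral_neg, intervalIntegral.integral_smul]
  rw [hpull] at hparts
  rw [← sub_neg_eq_add, hparts, sub_sub_cancel]

theorem tendsto_integral_cos_smul (h : IsDecayingPseudoResolvent R b M) (hb : 0 < b)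
    (ht : 0 < t) :
    Tendsto (fun c => ∫ l in b..c, Real.cos (l * t) • R l) atTop (𝓝 (cosIntegral R b t)) := by
  have hlim := ((h.tendsto_sin_div_smul_atTop ht).sub_const ((Real.sin (b * t) / t) • R b)).add
    ((intervalIntegral_tendsto_integral_Ioi b (h.integrableOn_sin_div_smul_mul_self hb ht)
      tendsto_id).const_smul Complex.I)
  rw [zero_sub] at hlim
  refine hlim.congr' ?_
  filter_upwards [eventually_ge_atTop b] with c hc
  exact (h.integral_cos_smul_eq hb ht hc).symm

end IsDecayingPseudoResolvent

theorem Asymptotics.isBigO_log_nhdsGT_zero_of_norm_le {E : Type*} [NormedAddCommGroup E]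
    {f : ℝ → E} {a c : ℝ} (h : ∀ᶠ t in 𝓝[>] 0, ‖f t‖ ≤ a + c * |Real.log t|) :
    f =O[𝓝[>] 0] Real.log := by
  have hconst : (fun _ => a) =O[𝓝[>] (0 : ℝ)] Real.log :=
    (isLittleO_const_left.2
      (Or.inr (tendsto_abs_atBot_atTop.comp Real.tendsto_log_nhdsGT_zero))).isBigO
  have habs : (fun t => c * |Real.log t|) =O[𝓝[>] (0 : ℝ)] Real.log :=
    (isBigO_abs_left.2 (isBigO_refl _ _)).const_mul_left c
  refine (IsBigO.of_bound 1 ?_).trans (hconst.add habs)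
  filter_upwards [h] with t ht
  rw [one_mul]
  exact ht.trans (le_abs_self _)

theorem cosine_resolvent_integral_exists_and_log_bound_general
    (D : Submodule ℂ X) (A : D →ₗ[ℂ] X)
    (b M : ℝ) (hb : 0 < b)
    (R : ℝ → X →L[ℂ] X)
    (hR : ∀ s : ℝ, b ≤ |s| → IsResolventOf D A (Complex.I * s) (R s))
    (hRb : ∀ s : ℝ, b ≤ |s| → ‖R s‖ ≤ M / |s|) :
    ∃ I : ℝ → X →L[ℂ] X,
      (∀ t : ℝ, 0 < t → t < Real.pi / (2 * b) →
        Tendsto (fun c : ℝ => ∫ l in b..c, Real.cos (l * t) • R l) atTop (𝓝 (I t))) ∧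
      (fun t : ℝ => ‖I t‖) =O[𝓝[>] (0 : ℝ)] fun t : ℝ => Real.log t := by
  have habs {s : ℝ} (hs : b ≤ s) : b ≤ |s| := hs.trans (le_abs_self s)
  have hres : IsDecayingPseudoResolvent R b M :=
    { sub_eq := fun s l hs hl => by
        rw [mul_sub]; exact (hR s (habs hs)).sub_eq_smul_mul (hR l (habs hl))
      norm_le := fun l hl => by
        simpa only [abs_of_pos (hb.trans_le hl)] using hRb l (habs hl) }
  refine ⟨cosIntegral R b, fun t ht _ => hres.tendsto_integral_cos_smul hb ht,
    (Asymptotics.isBigO_log_nhdsGT_zero_of_norm_le (a := M + M ^ 2 * (1 - Real.log b)) (c := M ^ 2)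
      ?_).norm_left⟩
  filter_upwards [Ioo_mem_nhdsGT (inv_pos.2 hb)] with t ⟨ht, htb⟩
  calc ‖cosIntegral R b t‖ ≤ M + M ^ 2 * (Real.log (t⁻¹ / b) + 1) :=
        hres.norm_cosIntegral_le hb ht ((le_inv_comm₀ hb ht).2 htb.le)
    _ ≤ M + M ^ 2 * (1 - Real.log b) + M ^ 2 * |Real.log t| := by
        rw [Real.log_div (inv_ne_zero ht.ne') hb.ne', Real.log_inv]
        linarith [mul_le_mul_of_nonneg_left (neg_le_abs (Real.log t)) (sq_nonneg M)]

/-- Lemma 3.4(i): `I(t) = ∫_b^∞ R(iλ,A) cos(λt) dλ` exists as an improper Riemann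
integral for `0 < t < π/(2b)` and `‖I(t)‖ = O(|ln t|)` as `t → 0⁺`. -/
theorem cosine_resolvent_integral_exists_and_log_bound
    (T : ℝ → X →L[ℂ] X) (hT : IsC0Semigroup T) (hol : IsHolomorphicSG T)
    (hbdd : ∃ K : ℝ, ∀ t : ℝ, 0 ≤ t → ‖T t‖ ≤ K)
    (D : Submodule ℂ X) (A : D →ₗ[ℂ] X) (hA : IsGeneratorOf T D A)
    (b M : ℝ) (hb : 0 < b)
    (R : ℝ → X →L[ℂ] X)
    (hR : ∀ s : ℝ, b ≤ |s| → IsResolventOf D A (Complex.I * s) (R s))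
    (hRb : ∀ s : ℝ, b ≤ |s| → ‖R s‖ ≤ M / |s|) :
    ∃ I : ℝ → X →L[ℂ] X,
      (∀ t : ℝ, 0 < t → t < Real.pi / (2 * b) →
        Tendsto (fun c : ℝ => ∫ l in b..c, Real.cos (l * t) • R l) atTop (𝓝 (I t))) ∧
      (fun t : ℝ => ‖I t‖) =O[𝓝[>] (0 : ℝ)] fun t : ℝ => Real.log t :=
  cosine_resolvent_integral_exists_and_log_bound_general D A b M hb R hR hRb

end
end

section
/- Let F ⊆ L¹_loc(ℝ, X) be a linear subspace that is closed under uniform limits of bounded uniformly continuous members, translation invariant, and closed under composition with bounded operators (B∘φ ∈ F for B ∈ L(X), φ ∈ F ∩ C_ub). If φ ∈ L∞(ℝ, X) satisfies M_h φ ∈ F for every h > 0 (where M_h φ(t) = (1/h)∫₀^h φ(t+s) ds), and F ∈ L¹(ℝ, L(X)), then F * φ ∈ F ∩ C_ub(ℝ, X). -/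
/-!
Approximate `F` in `L¹` by a continuous compactly supported `G`, and `G` by the step function
equal to `G (a (j + 1))` on each cell `(a j, a (j + 1)]` of a fine partition. Since `φ` is
essentially bounded by `C`, `‖F * φ - G * φ‖∞ ≤ C ‖F - G‖₁`, so `F * φ` is a uniform limit of
convolutions of step functions. The convolution of `B • 𝟙_(a, b]` with `φ` is
`t ↦ B ((b - a) • M_{b-a} φ (t - b))`: an operator applied to a translate of a mean, hence in `𝓕`,
and bounded and uniformly continuous because `M_h φ` is the difference quotient of the Lipschitz
primitive of `φ`.
-/

open MeasureTheory Filter Topology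

noncomputable section

variable {X : Type*} [NormedAddCommGroup X] [NormedSpace ℂ X] [CompleteSpace X]

def opConv (F : ℝ → X →L[ℂ] X) (φ : ℝ → X) (t : ℝ) : X := ∫ s, F s (φ (t - s))

/-- Bounded and uniformly continuous. -/
def BddUC (u : ℝ → X) : Prop := (∃ C : ℝ, ∀ t : ℝ, ‖u t‖ ≤ C) ∧ UniformContinuous u

/-- The mean `M_h φ (t) = (1/h) ∫₀^h φ(t+s) ds`. -/
def meanM (h : ℝ) (φ : ℝ → X) (t : ℝ) : X := h⁻¹ • ∫ s in (0:ℝ)..h, φ (t + s)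

open scoped NNReal
open Set Finset

section BoundedFunction

variable {E : Type*} [NormedAddCommGroup E] {φ : ℝ → E}

lemma intervalIntegrable_of_ae_norm_le (hφm : AEStronglyMeasurable φ volume) {C : ℝ}
    (hC : ∀ᵐ u, ‖φ u‖ ≤ C) (a b : ℝ) : IntervalIntegrable φ volume a b :=
  intervalIntegrable_iff.2 <| ((memLp_top_of_bound hφm C hC).locallyIntegrable le_top
    |>.integrableOn_isCompact isCompact_uIcc).mono_set uIoc_subset_uIcc

lemma intervalIntegrable_comp_sub_of_ae_norm_le (hφm : AEStronglyMeasurable φ volume) {C : ℝ}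
    (hC : ∀ᵐ u, ‖φ u‖ ≤ C) (t a b : ℝ) : IntervalIntegrable (fun s => φ (t - s)) volume a b := by
  simpa using (intervalIntegrable_of_ae_norm_le hφm hC (t - a) (t - b)).comp_sub_left t

lemma lipschitzWith_primitive_of_ae_norm_le [NormedSpace ℝ E]
    (hφm : AEStronglyMeasurable φ volume) {C : ℝ≥0} (hC : ∀ᵐ u, ‖φ u‖ ≤ C) (a : ℝ) :
    LipschitzWith C (fun x => ∫ u in a..x, φ u) := by
  refine LipschitzWith.of_dist_le_mul fun x y => ?_
  rw [dist_eq_norm, intervalIntegral.integral_interval_sub_left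
    (intervalIntegrable_of_ae_norm_le hφm hC a x) (intervalIntegrable_of_ae_norm_le hφm hC a y),
    Real.dist_eq]
  refine intervalIntegral.norm_integral_le_of_norm_le_const_ae ?_
  filter_upwards [hC] with u hu _ using hu

end BoundedFunction

section Mean

variable {E : Type*} [NormedAddCommGroup E] [NormedSpace ℂ E] {φ : ℝ → E}

lemma smul_meanM (h : ℝ) (φ : ℝ → E) (t : ℝ) : h • meanM h φ t = ∫ s in t..t + h, φ s := by
  obtain rfl | hh := eq_or_ne h 0
  · simp
  · rw [meanM, smul_inv_smul₀ hh, intervalIntegral.integral_comp_add_left, add_zero]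

lemma bddUC_meanM (hφm : AEStronglyMeasurable φ volume) {C : ℝ≥0} (hC : ∀ᵐ u, ‖φ u‖ ≤ C)
    (h : ℝ) : BddUC (meanM h φ) := by
  have hΦ := lipschitzWith_primitive_of_ae_norm_le hφm hC 0
  have hM : meanM h φ = fun t => h⁻¹ • ((∫ u in (0 : ℝ)..t + h, φ u) - ∫ u in (0 : ℝ)..t, φ u) := by
    funext t
    rw [meanM, intervalIntegral.integral_comp_add_left, add_zero,
      intervalIntegral.integral_interval_sub_left (intervalIntegrable_of_ae_norm_le hφm hC _ _)
      (intervalIntegrable_of_ae_norm_le hφm hC _ _)]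
  refine ⟨⟨C, fun t => ?_⟩, ?_⟩
  · rw [hM, norm_smul, norm_inv, ← dist_eq_norm]
    calc ‖h‖⁻¹ * dist _ _ ≤ ‖h‖⁻¹ * (C * ‖h‖) := by
          gcongr
          simpa using hΦ.dist_le_mul (t + h) t
      _ ≤ C := by
          obtain rfl | hh := eq_or_ne h 0
          · simp
          · rw [mul_comm, mul_assoc, mul_inv_cancel₀ (norm_ne_zero_iff.2 hh), mul_one]
  · rw [hM]
    exact ((hΦ.uniformContinuous.comp (uniformContinuous_id.add_const h)).sub
      hΦ.uniformContinuous).const_smul h⁻¹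

end Mean

section BddUC

variable {E : Type*} [NormedAddCommGroup E]

lemma bddUC_zero : BddUC (0 : ℝ → E) :=
  ⟨⟨0, fun _ => by simp⟩, uniformContinuous_const⟩

lemma BddUC.add {u v : ℝ → E} (hu : BddUC u) (hv : BddUC v) : BddUC (u + v) := by
  obtain ⟨⟨Cu, hCu⟩, hu⟩ := hu
  obtain ⟨⟨Cv, hCv⟩, hv⟩ := hv
  exact ⟨⟨Cu + Cv, fun t => (norm_add_le _ _).trans (add_le_add (hCu t) (hCv t))⟩, hu.add hv⟩

lemma BddUC.comp_add_left {u : ℝ → E} (hu : BddUC u) (a : ℝ) : BddUC (fun t => u (a + t)) :=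
  let ⟨⟨Cu, hCu⟩, hu⟩ := hu
  ⟨⟨Cu, fun t => hCu (a + t)⟩, hu.comp (uniformContinuous_const.add uniformContinuous_id)⟩

lemma ContinuousLinearMap.bddUC_comp {𝕜 F : Type*} [NontriviallyNormedField 𝕜] [NormedSpace 𝕜 E]
    [NormedAddCommGroup F] [NormedSpace 𝕜 F] (B : E →L[𝕜] F) {u : ℝ → E} (hu : BddUC u) :
    BddUC (fun t => B (u t)) := by
  obtain ⟨⟨Cu, hCu⟩, hu⟩ := hu
  exact ⟨⟨‖B‖ * Cu, fun t => B.le_of_opNorm_le_of_le le_rfl (hCu t)⟩, B.uniformContinuous.comp hu⟩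

lemma mem_and_bddUC_of_forall_approx {𝓕 : Set (ℝ → E)}
    (hclosed : ∀ (φn : ℕ → ℝ → E) (ψ : ℝ → E),
      (∀ n, φn n ∈ 𝓕 ∧ BddUC (φn n)) → TendstoUniformly φn ψ atTop → ψ ∈ 𝓕)
    {f : ℝ → E} (happrox : ∀ ε > 0, ∃ Ψ, (Ψ ∈ 𝓕 ∧ BddUC Ψ) ∧ ∀ t, ‖f t - Ψ t‖ ≤ ε) :
    f ∈ 𝓕 ∧ BddUC f := by
  choose Ψ hΨ hclose using fun n : ℕ => happrox (1 / (n + 1)) Nat.one_div_pos_of_nat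
  have hlim : TendstoUniformly Ψ f atTop := by
    refine Metric.tendstoUniformly_iff.2 fun ε hε => ?_
    filter_upwards [tendsto_one_div_add_atTop_nhds_zero_nat.eventually (gt_mem_nhds hε)]
      with n hn t
    exact (dist_eq_norm (f t) (Ψ n t) ▸ hclose n t).trans_lt hn
  obtain ⟨K, hK⟩ := (hΨ 0).2.1
  refine ⟨hclosed Ψ f hΨ hlim, ⟨K + 1, fun t => ?_⟩,
    hlim.uniformContinuous (Frequently.of_forall fun n => (hΨ n).2.2)⟩
  calc ‖f t‖ ≤ ‖Ψ 0 t‖ + ‖f t - Ψ 0 t‖ := norm_le_norm_add_norm_sub' _ _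
    _ ≤ K + 1 := add_le_add (hK t) (by simpa using hclose 0 t)

end BddUC

section Convolution

variable {E : Type*} [NormedAddCommGroup E] [NormedSpace ℂ E] {φ : ℝ → E} {C : ℝ≥0}

lemma intervalIntegral_clm_apply_comp_sub_eq_meanM [CompleteSpace E]
    (hφm : AEStronglyMeasurable φ volume) (hC : ∀ᵐ u, ‖φ u‖ ≤ C) (B : E →L[ℂ] E) (a b t : ℝ) :
    ∫ s in a..b, B (φ (t - s)) = (((b - a : ℝ) : ℂ) • B) (meanM (b - a) φ (-b + t)) := by
  rw [B.intervalIntegral_comp_comm (intervalIntegrable_comp_sub_of_ae_norm_le hφm hC t a b),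
    intervalIntegral.integral_comp_sub_left, smul_apply, Complex.coe_smul,
    ← B.map_smul_of_tower, smul_meanM]
  congr 2 <;> ring

lemma integrable_clm_apply_comp_sub {G : ℝ → E →L[ℂ] E} (hG : Integrable G)
    (hφm : AEStronglyMeasurable φ volume) (hC : ∀ᵐ u, ‖φ u‖ ≤ C) (t : ℝ) :
    Integrable (fun s => G s (φ (t - s))) := by
  have hmp := (Measure.measurePreserving_sub_left volume t).quasiMeasurePreserving
  refine (hG.norm.mul_const C).mono' ?_ ?_
  · simpa using ContinuousLinearMap.aestronglyMeasurable_comp₂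
      (ContinuousLinearMap.id ℂ (E →L[ℂ] E)) hG.1 (hφm.comp_quasiMeasurePreserving hmp)
  · filter_upwards [hmp.ae hC] with s hs
    exact (G s).le_of_opNorm_le_of_le le_rfl hs

lemma norm_opConv_sub_opConv_le {F G : ℝ → E →L[ℂ] E} (hF : Integrable F) (hG : Integrable G)
    (hφm : AEStronglyMeasurable φ volume) (hC : ∀ᵐ u, ‖φ u‖ ≤ C) (t : ℝ) :
    ‖opConv F φ t - opConv G φ t‖ ≤ (∫ s, ‖F s - G s‖) * C := by
  have hmp := (Measure.measurePreserving_sub_left volume t).quasiMeasurePreserving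
  rw [opConv, opConv, ← integral_sub (integrable_clm_apply_comp_sub hF hφm hC t)
    (integrable_clm_apply_comp_sub hG hφm hC t), ← integral_mul_const]
  refine norm_integral_le_of_norm_le ((hF.sub hG).norm.mul_const C) ?_
  filter_upwards [hmp.ae hC] with s hs
  rw [← sub_apply]
  exact (F s - G s).le_of_opNorm_le_of_le le_rfl hs

lemma norm_intervalIntegral_clm_apply_sub_le {G : ℝ → E →L[ℂ] E} (hG : Integrable G)
    (hφm : AEStronglyMeasurable φ volume) (hC : ∀ᵐ u, ‖φ u‖ ≤ C) (B : E →L[ℂ] E) {a b ε : ℝ}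
    (hab : a ≤ b) (hosc : ∀ s ∈ Ioc a b, dist (G s) B ≤ ε) (t : ℝ) :
    ‖(∫ s in a..b, G s (φ (t - s))) - ∫ s in a..b, B (φ (t - s))‖ ≤ ε * C * (b - a) := by
  have hmp := (Measure.measurePreserving_sub_left volume t).quasiMeasurePreserving
  have hB := intervalIntegrable_comp_sub_of_ae_norm_le hφm hC t a b
  rw [← intervalIntegral.integral_sub
    (integrable_clm_apply_comp_sub hG hφm hC t).intervalIntegrable
    ⟨B.integrable_comp hB.1, B.integrable_comp hB.2⟩, ← abs_of_nonneg (sub_nonneg.2 hab)]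
  refine intervalIntegral.norm_integral_le_of_norm_le_const_ae ?_
  filter_upwards [hmp.ae hC] with s hs hsab
  rw [uIoc_of_le hab] at hsab
  rw [← sub_apply]
  exact (G s - B).le_of_opNorm_le_of_le (dist_eq_norm (G s) B ▸ hosc s hsab) hs

lemma norm_opConv_sub_sum_le {G : ℝ → E →L[ℂ] E} (hG : Integrable G)
    (hφm : AEStronglyMeasurable φ volume) (hC : ∀ᵐ u, ‖φ u‖ ≤ C) {m : ℕ} {a : ℕ → ℝ}
    (ha : Monotone a) (hsupp : Function.support G ⊆ Ioc (a 0) (a m)) {ε : ℝ}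
    (hosc : ∀ j, ∀ s ∈ Ioc (a j) (a (j + 1)), dist (G s) (G (a (j + 1))) ≤ ε) (t : ℝ) :
    ‖opConv G φ t - ∑ j ∈ range m, ∫ s in a j..a (j + 1), G (a (j + 1)) (φ (t - s))‖ ≤
      ε * C * (a m - a 0) := by
  have hsplit : opConv G φ t = ∑ j ∈ range m, ∫ s in a j..a (j + 1), G s (φ (t - s)) := by
    rw [intervalIntegral.sum_integral_adjacent_intervals fun j _ =>
        (integrable_clm_apply_comp_sub hG hφm hC t).intervalIntegrable,
      intervalIntegral.integral_of_le (ha (Nat.zero_le m)), opConv,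
      setIntegral_eq_integral_of_forall_compl_eq_zero]
    intro s hs
    rw [Function.notMem_support.1 fun h => hs (hsupp h), zero_apply]
  rw [hsplit, ← Finset.sum_sub_distrib, ← Finset.sum_range_sub, Finset.mul_sum]
  exact (norm_sum_le _ _).trans <| Finset.sum_le_sum fun j _ =>
    norm_intervalIntegral_clm_apply_sub_le hG hφm hC _ (ha j.le_succ) (hosc j) t

end Convolution

lemma UniformContinuous.exists_partition_dist_le {α : Type*} [PseudoMetricSpace α] {G : ℝ → α}
    (hG : UniformContinuous G) {c d : ℝ} (hcd : c < d) {ε : ℝ} (hε : 0 < ε) :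
    ∃ (m : ℕ) (a : ℕ → ℝ), StrictMono a ∧ a 0 = c ∧ a m = d ∧
      ∀ j, ∀ s ∈ Ioc (a j) (a (j + 1)), dist (G s) (G (a (j + 1))) ≤ ε := by
  obtain ⟨δ, hδ, hGδ⟩ := Metric.uniformContinuous_iff.1 hG ε hε
  obtain ⟨m, hm⟩ := exists_nat_gt ((d - c) / δ)
  have hm0 : (0 : ℝ) < m := (div_pos (sub_pos.2 hcd) hδ).trans hm
  have hstep : (d - c) / m < δ := by
    rw [div_lt_iff₀ hm0, mul_comm, ← div_lt_iff₀ hδ]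
    exact hm
  refine ⟨m, fun j => c + j * ((d - c) / m), fun i j hij => ?_, by simp, by field_simp; ring,
    fun j s hs => (hGδ ?_).le⟩
  · have : (i : ℝ) < j := by exact_mod_cast hij
    dsimp only
    gcongr
  · simp only [Set.mem_Ioc, Nat.cast_succ] at hs
    rw [Real.dist_eq, abs_lt]
    push_cast
    constructor <;> linarith

lemma HasCompactSupport.exists_support_subset_Ioc {α : Type*} [Zero α] {f : ℝ → α}
    (hf : HasCompactSupport f) : ∃ c d, c < d ∧ Function.support f ⊆ Ioc c d := by
  obtain ⟨c, hc⟩ := hf.isCompact.bddBelow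
  obtain ⟨d, hd⟩ := hf.isCompact.bddAbove
  refine ⟨c - 1, max c d, by linarith [le_max_left c d], fun s hs => ?_⟩
  have hs' := subset_tsupport f hs
  exact ⟨by linarith [hc hs'], (hd hs').trans (le_max_right c d)⟩

section Approximation

variable {E : Type*} [NormedAddCommGroup E] [NormedSpace ℂ E] {φ : ℝ → E} {C : ℝ≥0}

lemma exists_norm_opConv_sub_sum_le {F : ℝ → E →L[ℂ] E} (hF : Integrable F)
    (hφm : AEStronglyMeasurable φ volume) (hC : ∀ᵐ u, ‖φ u‖ ≤ C) {ε : ℝ} (hε : 0 < ε) :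
    ∃ (m : ℕ) (a : ℕ → ℝ) (B : ℕ → E →L[ℂ] E), StrictMono a ∧
      ∀ t, ‖opConv F φ t - ∑ j ∈ range m, ∫ s in a j..a (j + 1), B j (φ (t - s))‖ ≤ ε := by
  set η := ε / (2 * (C + 1)) with hη
  have hη0 : 0 < η := by positivity
  obtain ⟨G, hGc, hFG, hGcont, hG⟩ := hF.exists_hasCompactSupport_integral_sub_le hη0
  obtain ⟨c, d, hcd, hsupp⟩ := hGc.exists_support_subset_Ioc
  obtain ⟨m, a, ha, ha0, ham, hosc⟩ := (hGc.uniformContinuous_of_continuous hGcont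
    ).exists_partition_dist_le hcd (div_pos hη0 (sub_pos.2 hcd))
  refine ⟨m, a, fun j => G (a (j + 1)), ha, fun t => ?_⟩
  have hGsum := norm_opConv_sub_sum_le hG hφm hC ha.monotone (ha0 ▸ ham ▸ hsupp) hosc t
  rw [ha0, ham] at hGsum
  calc _ ≤ ‖opConv F φ t - opConv G φ t‖ + ‖opConv G φ t -
          ∑ j ∈ range m, ∫ s in a j..a (j + 1), G (a (j + 1)) (φ (t - s))‖ :=
        norm_sub_le_norm_sub_add_norm_sub _ _ _
    _ ≤ η * C + η / (d - c) * C * (d - c) := by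
        gcongr
        exact (norm_opConv_sub_opConv_le hF hG hφm hC t).trans (by gcongr)
    _ = ε * (C / (C + 1)) := by
        rw [hη]
        field_simp [(sub_pos.2 hcd).ne']
        ring
    _ ≤ ε := mul_le_of_le_one_right hε.le (div_le_one_of_le₀ (by linarith) (by positivity))

end Approximation

theorem conv_mean_class_mem_general
    (𝓕 : Set (ℝ → X))
    (hlin : ∀ f ∈ 𝓕, ∀ g ∈ 𝓕, f + g ∈ 𝓕)
    (hzero : (0 : ℝ → X) ∈ 𝓕)
    (hclosed : ∀ (φn : ℕ → ℝ → X) (ψ : ℝ → X),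
      (∀ n, φn n ∈ 𝓕 ∧ BddUC (φn n)) → TendstoUniformly φn ψ atTop → ψ ∈ 𝓕)
    (htrans : ∀ f ∈ 𝓕, ∀ a : ℝ, (fun t => f (a + t)) ∈ 𝓕)
    (hop : ∀ B : X →L[ℂ] X, ∀ f ∈ 𝓕, BddUC f → (fun t => B (f t)) ∈ 𝓕)
    (φ : ℝ → X) (hφ : EssBdd φ) (hmean : ∀ h : ℝ, 0 < h → meanM h φ ∈ 𝓕)
    (F : ℝ → X →L[ℂ] X) (hF : Integrable F) :
    opConv F φ ∈ 𝓕 ∧ BddUC (opConv F φ) := by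
  obtain ⟨hφm, C, hC⟩ := hφ
  replace hC : ∀ᵐ u, ‖φ u‖ ≤ C.toNNReal := hC.mono fun u hu => hu.trans (Real.le_coe_toNNReal C)
  have hblock (B : X →L[ℂ] X) {a b : ℝ} (hab : a < b) :
      (fun t => ∫ s in a..b, B (φ (t - s))) ∈ 𝓕 ∧ BddUC (fun t => ∫ s in a..b, B (φ (t - s))) := by
    have hM := (bddUC_meanM hφm hC (b - a)).comp_add_left (-b)
    simp_rw [intervalIntegral_clm_apply_comp_sub_eq_meanM hφm hC B a b]
    exact ⟨hop _ _ (htrans _ (hmean _ (sub_pos.2 hab)) (-b)) hM,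
      ContinuousLinearMap.bddUC_comp _ hM⟩
  refine mem_and_bddUC_of_forall_approx hclosed fun ε hε => ?_
  obtain ⟨m, a, B, ha, hclose⟩ := exists_norm_opConv_sub_sum_le hF hφm hC hε
  refine ⟨fun t => ∑ j ∈ range m, ∫ s in a j..a (j + 1), B j (φ (t - s)), ?_, hclose⟩
  rw [← Finset.sum_fn]
  exact Finset.sum_induction _ (fun f => f ∈ 𝓕 ∧ BddUC f)
    (fun f g hf hg => ⟨hlin f hf.1 g hg.1, hf.2.add hg.2⟩) ⟨hzero, bddUC_zero⟩
    fun j _ => hblock (B j) (ha j.lt_succ_self)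

/-- Lemma 4.1: if `𝓕` is linear, closed under uniform limits of its bounded
uniformly continuous members, translation invariant and closed under bounded
operators, and `φ ∈ L∞` has all its means `M_h φ` in `𝓕`, then
`F * φ ∈ 𝓕 ∩ C_ub` for every `F ∈ L¹(ℝ, L(X))`. -/
theorem conv_mean_class_mem
    (𝓕 : Set (ℝ → X))
    (hlin : ∀ f ∈ 𝓕, ∀ g ∈ 𝓕, f + g ∈ 𝓕)
    (hsmul : ∀ f ∈ 𝓕, ∀ c : ℂ, c • f ∈ 𝓕)
    (hzero : (0 : ℝ → X) ∈ 𝓕)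
    (hclosed : ∀ (φn : ℕ → ℝ → X) (ψ : ℝ → X),
      (∀ n, φn n ∈ 𝓕 ∧ BddUC (φn n)) → TendstoUniformly φn ψ atTop → ψ ∈ 𝓕)
    (htrans : ∀ f ∈ 𝓕, ∀ a : ℝ, (fun t => f (a + t)) ∈ 𝓕)
    (hop : ∀ B : X →L[ℂ] X, ∀ f ∈ 𝓕, BddUC f → (fun t => B (f t)) ∈ 𝓕)
    (φ : ℝ → X) (hφ : EssBdd φ) (hmean : ∀ h : ℝ, 0 < h → meanM h φ ∈ 𝓕)
    (F : ℝ → X →L[ℂ] X) (hF : Integrable F) :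
    opConv F φ ∈ 𝓕 ∧ BddUC (opConv F φ) :=
  conv_mean_class_mem_general 𝓕 hlin hzero hclosed htrans hop φ hφ hmean F hF

end
end
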